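/- For every n ≥ 4, the largest eigenvalue λ_{n+1} of the adjacency matrix of the tadpole graph Tad(3, n−2) on n+1 vertices is strictly greater than the largest eigenvalue λ_n of the adjacency matrix of the tadpole graph Tad(3, n−3) on n vertices; that is, the spectral radius of the tadpole family is strictly increasing in the number of vertices. -/

import Mathlib

/-!
Let `v ≥ 0` be a Perron eigenvector of `Tad(3, n-3)` for its top eigenvalue `μ`: the entrywise
absolute value of a top eigenvector attains the maximal Rayleigh quotient, so it is again a top
eigenvector. Since the graph is connected, `v` is positive, in particular at the end `n-1` of
the tail. Appending the new tail vertex with weight `t > 0` gives a test vector for `Tad(3, n-2)`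
with Rayleigh quotient `(μ ‖v‖² + 2 t v_{n-1}) / (‖v‖² + t²)`, which exceeds `μ` as soon as
`μ t < 2 v_{n-1}`.
-/

open Matrix

/-- The tadpole graph `Tad(3, n−3)` on `Fin n`: vertices `0, 1, 2` form a triangle and
`2, 3, …, n−1` form a path. -/
def tadpole (n : ℕ) : SimpleGraph (Fin n) :=
  SimpleGraph.fromRel (fun i j =>
    (i.val = 0 ∧ j.val = 1) ∨ (i.val = 0 ∧ j.val = 2) ∨ (i.val = 1 ∧ j.val = 2) ∨
      (2 ≤ i.val ∧ j.val = i.val + 1))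

/-- The adjacency matrix over `ℝ` of the tadpole graph. -/
noncomputable def tadAdj (n : ℕ) : Matrix (Fin n) (Fin n) ℝ :=
  letI : DecidableRel (tadpole n).Adj := Classical.decRel _
  (tadpole n).adjMatrix ℝ

lemma tadAdj_isHermitian (n : ℕ) : (tadAdj n).IsHermitian := by
  letI : DecidableRel (tadpole n).Adj := Classical.decRel _
  show ((tadpole n).adjMatrix ℝ).IsHermitian
  rw [Matrix.IsHermitian, Matrix.conjTranspose_eq_transpose_of_trivial]
  exact SimpleGraph.isSymm_adjMatrix _

/-- The largest eigenvalue of the (real symmetric) tadpole adjacency matrix on `n ≥ 1`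
vertices. -/
noncomputable def tadTopEig (n : ℕ) (hn : 1 ≤ n) : ℝ :=
  letI : Nonempty (Fin n) := ⟨⟨0, by omega⟩⟩
  Finset.univ.sup' Finset.univ_nonempty (tadAdj_isHermitian n).eigenvalues

namespace Matrix

lemma dotProduct_smul_one_sub_mulVec {ι R : Type*} [Fintype ι] [DecidableEq ι] [CommRing R]
    (A : Matrix ι ι R) (c : R) (x : ι → R) :
    x ⬝ᵥ (c • 1 - A) *ᵥ x = c * (x ⬝ᵥ x) - x ⬝ᵥ A *ᵥ x := by
  rw [sub_mulVec, smul_mulVec, one_mulVec, dotProduct_sub, dotProduct_smul, smul_eq_mul]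

lemma snoc_dotProduct_snoc {R : Type*} [CommSemiring R] {n : ℕ} (v w : Fin n → R) (s t : R) :
    (Fin.snoc v s : Fin (n + 1) → R) ⬝ᵥ Fin.snoc w t = v ⬝ᵥ w + s * t := by
  simp [dotProduct, Fin.sum_univ_castSucc]

lemma snoc_dotProduct_mulVec_snoc {R : Type*} [CommSemiring R] {n : ℕ}
    (M : Matrix (Fin (n + 1)) (Fin (n + 1)) R) (v : Fin n → R) (t : R) :
    Fin.snoc v t ⬝ᵥ M *ᵥ Fin.snoc v t =
      v ⬝ᵥ M.submatrix Fin.castSucc Fin.castSucc *ᵥ v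
        + t * (v ⬝ᵥ fun i => M i.castSucc (Fin.last n))
        + t * ((fun j => M (Fin.last n) j.castSucc) ⬝ᵥ v)
        + t * t * M (Fin.last n) (Fin.last n) := by
  simp only [dotProduct, mulVec, Fin.sum_univ_castSucc, Fin.snoc_castSucc, Fin.snoc_last,
    submatrix_apply, mul_add, Finset.sum_add_distrib, Finset.mul_sum]
  ring_nf

namespace IsHermitian

variable {ι : Type*} [Fintype ι] [DecidableEq ι] {A : Matrix ι ι ℝ} (hA : A.IsHermitian) {c : ℝ}

include hA

lemma posSemidef_smul_one_sub (hc : ∀ i, hA.eigenvalues i ≤ c) :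
    (c • 1 - A).PosSemidef := by
  rw [posSemidef_iff_isHermitian_and_spectrum_nonneg]
  refine ⟨(isHermitian_one.smul (IsSelfAdjoint.all c)).sub hA, ?_⟩
  rw [← Algebra.algebraMap_eq_smul_one, ← spectrum.singleton_sub_eq,
    hA.spectrum_real_eq_range_eigenvalues]
  rintro _ ⟨_, rfl, _, ⟨i, rfl⟩, rfl⟩
  simpa using hc i

lemma dotProduct_mulVec_le (hc : ∀ i, hA.eigenvalues i ≤ c) (x : ι → ℝ) :
    x ⬝ᵥ A *ᵥ x ≤ c * (x ⬝ᵥ x) := by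
  have := (hA.posSemidef_smul_one_sub hc).dotProduct_mulVec_nonneg x
  rw [star_trivial, dotProduct_smul_one_sub_mulVec] at this
  linarith

lemma mulVec_eq_smul_of_dotProduct_mulVec_eq (hc : ∀ i, hA.eigenvalues i ≤ c) {x : ι → ℝ}
    (hx : x ⬝ᵥ A *ᵥ x = c * (x ⬝ᵥ x)) : A *ᵥ x = c • x := by
  have := ((hA.posSemidef_smul_one_sub hc).dotProduct_mulVec_zero_iff x).1 (by
    rw [star_trivial, dotProduct_smul_one_sub_mulVec, hx, sub_self])
  rw [sub_mulVec, smul_mulVec, one_mulVec, sub_eq_zero] at this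
  exact this.symm

lemma exists_nonneg_mulVec_eq_smul (hA_nonneg : ∀ i j, 0 ≤ A i j)
    (hc : ∀ i, hA.eigenvalues i ≤ c) {i : ι} (hi : hA.eigenvalues i = c) :
    ∃ x : ι → ℝ, 0 ≤ x ∧ x ≠ 0 ∧ A *ᵥ x = c • x := by
  set v : ι → ℝ := WithLp.ofLp (hA.eigenvectorBasis i)
  have hv : A *ᵥ v = c • v := hi ▸ hA.mulVec_eigenvectorBasis i
  have hv_ne : v ≠ 0 := (WithLp.ofLp_eq_zero 2).ne.2 <| hA.eigenvectorBasis.orthonormal.ne_zero i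
  refine ⟨|v|, abs_nonneg v, by simpa using hv_ne,
    hA.mulVec_eq_smul_of_dotProduct_mulVec_eq hc ?_⟩
  refine le_antisymm (hA.dotProduct_mulVec_le hc _) ?_
  calc c * (|v| ⬝ᵥ |v|) = v ⬝ᵥ A *ᵥ v := by
        rw [hv, dotProduct_smul, smul_eq_mul]
        simp [dotProduct, abs_mul_abs_self]
    _ ≤ |v| ⬝ᵥ A *ᵥ |v| := by
        simp only [dotProduct, mulVec, Finset.mul_sum]
        refine Finset.sum_le_sum fun j _ => Finset.sum_le_sum fun k _ => ?_
        calc v j * (A j k * v k) ≤ |v j * (A j k * v k)| := le_abs_self _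
          _ = |v| j * (A j k * |v| k) := by simp [abs_mul, abs_of_nonneg (hA_nonneg j k)]

end IsHermitian

end Matrix

lemma SimpleGraph.Preconnected.eq_zero_of_adjMatrix_mulVec_eq_smul {V R : Type*} [Fintype V]
    [Semiring R] [PartialOrder R] [IsOrderedRing R] {G : SimpleGraph V} [DecidableRel G.Adj]
    (hG : G.Preconnected) {x : V → R} {c : R} (hx : 0 ≤ x) (hAx : G.adjMatrix R *ᵥ x = c • x)
    {i : V} (hi : x i = 0) : x = 0 := by
  have step {u w : V} (huw : G.Adj u w) (hu : x u = 0) : x w = 0 := by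
    have hsum : ∑ k ∈ G.neighborFinset u, x k = 0 := by
      simpa [hu] using congrFun hAx u
    exact (Finset.sum_eq_zero_iff_of_nonneg fun k _ => hx k).1 hsum w (by simpa using huw)
  funext j
  obtain ⟨p⟩ := hG i j
  induction p with
  | nil => exact hi
  | cons huw _ ih => exact ih (step huw hi)

lemma tadpole_adj {n : ℕ} {i j : Fin n} :
    (tadpole n).Adj i j ↔ i ≠ j ∧
      ((i.val = 0 ∧ j.val = 1) ∨ (i.val = 0 ∧ j.val = 2) ∨ (i.val = 1 ∧ j.val = 2) ∨
        (2 ≤ i.val ∧ j.val = i.val + 1) ∨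
       (j.val = 0 ∧ i.val = 1) ∨ (j.val = 0 ∧ i.val = 2) ∨ (j.val = 1 ∧ i.val = 2) ∨
        (2 ≤ j.val ∧ i.val = j.val + 1)) := by
  rw [tadpole, SimpleGraph.fromRel_adj]
  tauto

lemma pathGraph_le_tadpole (n : ℕ) : SimpleGraph.pathGraph n ≤ tadpole n := by
  intro i j h
  rw [SimpleGraph.pathGraph_adj] at h
  rw [tadpole_adj, Ne, Fin.ext_iff]
  omega

lemma tadpole_preconnected (n : ℕ) : (tadpole n).Preconnected :=
  (SimpleGraph.pathGraph_preconnected n).mono (pathGraph_le_tadpole n)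

lemma tadpole_adj_castSucc {n : ℕ} {i j : Fin n} :
    (tadpole (n + 1)).Adj i.castSucc j.castSucc ↔ (tadpole n).Adj i j := by
  simp only [tadpole_adj, Ne, Fin.castSucc_inj, Fin.val_castSucc]

lemma tadpole_adj_last {n : ℕ} (hn : 3 ≤ n) {j : Fin (n + 1)} :
    (tadpole (n + 1)).Adj j (Fin.last n) ↔ j.val = n - 1 := by
  rw [tadpole_adj, Ne, Fin.ext_iff, Fin.val_last]
  omega

open Classical in
lemma tadAdj_apply {n : ℕ} (i j : Fin n) :
    tadAdj n i j = if (tadpole n).Adj i j then 1 else 0 := rfl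

lemma tadAdj_nonneg {n : ℕ} (i j : Fin n) : 0 ≤ tadAdj n i j := by
  rw [tadAdj_apply]
  split_ifs <;> norm_num

lemma pos_of_tadAdj_mulVec_eq_smul {n : ℕ} {v : Fin n → ℝ} {c : ℝ} (hv_nonneg : 0 ≤ v)
    (hv_ne : v ≠ 0) (hv : tadAdj n *ᵥ v = c • v) (i : Fin n) : 0 < v i := by
  let _ : DecidableRel (tadpole n).Adj := Classical.decRel _
  exact (hv_nonneg i).lt_of_ne fun h =>
    hv_ne ((tadpole_preconnected n).eq_zero_of_adjMatrix_mulVec_eq_smul hv_nonneg hv h.symm)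

lemma tadAdj_submatrix_castSucc (n : ℕ) :
    (tadAdj (n + 1)).submatrix Fin.castSucc Fin.castSucc = tadAdj n := by
  ext i j
  classical
  simp only [submatrix_apply, tadAdj_apply, tadpole_adj_castSucc]

lemma tadAdj_castSucc_last {n : ℕ} (hn : 3 ≤ n) :
    (fun i : Fin n => tadAdj (n + 1) i.castSucc (Fin.last n)) =
      Pi.single ⟨n - 1, by omega⟩ 1 := by
  ext i
  simp only [tadAdj_apply, tadpole_adj_last hn, Pi.single_apply, Fin.ext_iff, Fin.val_castSucc]

lemma tadAdj_last_castSucc {n : ℕ} (hn : 3 ≤ n) :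
    (fun j : Fin n => tadAdj (n + 1) (Fin.last n) j.castSucc) =
      Pi.single ⟨n - 1, by omega⟩ 1 := by
  ext j
  simp only [tadAdj_apply, SimpleGraph.adj_comm _ (Fin.last n), tadpole_adj_last hn,
    Pi.single_apply, Fin.ext_iff, Fin.val_castSucc]

lemma tadAdj_last_last (n : ℕ) : tadAdj (n + 1) (Fin.last n) (Fin.last n) = 0 := by
  simp [tadAdj_apply]

lemma snoc_dotProduct_tadAdj_mulVec_snoc {n : ℕ} (hn : 3 ≤ n) (v : Fin n → ℝ) (t : ℝ) :
    Fin.snoc v t ⬝ᵥ tadAdj (n + 1) *ᵥ Fin.snoc v t =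
      v ⬝ᵥ tadAdj n *ᵥ v + 2 * t * v ⟨n - 1, by omega⟩ := by
  rw [snoc_dotProduct_mulVec_snoc, tadAdj_submatrix_castSucc, tadAdj_castSucc_last hn,
    tadAdj_last_castSucc hn, tadAdj_last_last, dotProduct_single, single_dotProduct]
  ring

section tadTopEig

variable {n : ℕ} (hn : 1 ≤ n)

lemma eigenvalues_le_tadTopEig (i : Fin n) :
    (tadAdj_isHermitian n).eigenvalues i ≤ tadTopEig n hn :=
  Finset.le_sup' _ (Finset.mem_univ i)

lemma dotProduct_tadAdj_mulVec_le (x : Fin n → ℝ) :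
    x ⬝ᵥ tadAdj n *ᵥ x ≤ tadTopEig n hn * (x ⬝ᵥ x) :=
  (tadAdj_isHermitian n).dotProduct_mulVec_le (eigenvalues_le_tadTopEig hn) x

lemma exists_nonneg_tadAdj_mulVec_eq_smul :
    ∃ v : Fin n → ℝ, 0 ≤ v ∧ v ≠ 0 ∧ tadAdj n *ᵥ v = tadTopEig n hn • v := by
  have : Nonempty (Fin n) := ⟨⟨0, hn⟩⟩
  obtain ⟨i, -, hi⟩ :=
    Finset.exists_mem_eq_sup' Finset.univ_nonempty (tadAdj_isHermitian n).eigenvalues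
  exact (tadAdj_isHermitian n).exists_nonneg_mulVec_eq_smul tadAdj_nonneg
    (eigenvalues_le_tadTopEig hn) hi.symm

end tadTopEig

/-- for every `n ≥ 4`, the largest eigenvalue of the adjacency matrix of
the tadpole graph `Tad(3, n−2)` on `n+1` vertices is strictly greater than that of
`Tad(3, n−3)` on `n` vertices: the tadpole spectral radius is strictly increasing. -/
theorem tadpole_spectralRadius_strictMono
    {n : ℕ} (hn : 4 ≤ n) :
    tadTopEig n (by omega) < tadTopEig (n + 1) (by omega) := by
  obtain ⟨v, hv_nonneg, hv_ne, hv⟩ := exists_nonneg_tadAdj_mulVec_eq_smul (n := n) (by omega)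
  set μ := tadTopEig n (by omega)
  set c := v ⟨n - 1, by omega⟩
  have hc : 0 < c := pos_of_tadAdj_mulVec_eq_smul hv_nonneg hv_ne hv _
  set t := c / (|μ| + 1)
  have ht : 0 < t := by positivity
  have hμt : μ * t < 2 * c :=
    calc μ * t ≤ |μ| * t := mul_le_mul_of_nonneg_right (le_abs_self μ) ht.le
      _ < (|μ| + 1) * t := by linarith
      _ = c := mul_div_cancel₀ _ (by positivity)
      _ < 2 * c := by linarith
  have hx := dotProduct_tadAdj_mulVec_le (n := n + 1) (by omega) (Fin.snoc v t)
  rw [snoc_dotProduct_tadAdj_mulVec_snoc (by omega), snoc_dotProduct_snoc, hv, dotProduct_smul,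
    smul_eq_mul] at hx
  have hvv : 0 ≤ v ⬝ᵥ v := Finset.sum_nonneg fun i _ => mul_self_nonneg (v i)
  refine lt_of_mul_lt_mul_right ?_ (add_nonneg hvv (mul_self_nonneg t))
  calc μ * (v ⬝ᵥ v + t * t) < μ * (v ⬝ᵥ v) + 2 * t * c := by
        linarith [mul_lt_mul_of_pos_right hμt ht]
    _ ≤ _ := hx
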